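/- Let A be a subfield of a field B and let T = A + X·B[X]. Then every nonzero prime ideal of T is a maximal ideal. -/

import Mathlib

/-- The polynomial composite `A + X·B[X]`: the subring of `B[X]` of polynomials
whose constant coefficient lies in `A`. -/
def Subring.composite {B : Type*} [CommRing B] (A : Subring B) : Subring (Polynomial B) where
  carrier := {f : Polynomial B | f.coeff 0 ∈ A}
  mul_mem' {f g} hf hg := by
    simp only [Set.mem_setOf_eq, Polynomial.mul_coeff_zero] at *
    exact mul_mem hf hg
  one_mem' := by
    simp only [Set.mem_setOf_eq, Polynomial.coeff_one_zero]
    exact one_mem A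
  add_mem' {f g} hf hg := by
    simp only [Set.mem_setOf_eq, Polynomial.coeff_add] at *
    exact add_mem hf hg
  zero_mem' := by
    simp only [Set.mem_setOf_eq, Polynomial.coeff_zero]
    exact zero_mem A
  neg_mem' {f} hf := by
    simp only [Set.mem_setOf_eq, Polynomial.coeff_neg] at *
    exact neg_mem hf

theorem Subring.mem_composite {B : Type*} [CommRing B] (A : Subring B) (f : Polynomial B) :
    f ∈ A.composite ↔ f.coeff 0 ∈ A := Iff.rfl

/-!
Let `x = X ∈ T = A + X·B[X]`; then `x·B[X] ⊆ T`, i.e. `x` lies in the conductor of `T` in `B[X]`.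
If `x ∈ P`, then `(x f)² = x·(x f²) ∈ P`, so `P` contains `x·B[X]`, the kernel of the
constant-coefficient map `T → A`, which is maximal because `A` is a field.
If `x ∉ P`, then `Q = {s ∈ B[X] | x s ∈ P}` is a prime of `B[X]` with `Q ∩ T = P`; it is nonzero,
hence maximal in the principal ideal domain `B[X]`. Choosing `t` with `x t ≡ 1 (mod Q)`, every `s`
satisfies `s ≡ (x s)(x t²) (mod Q)` with both factors in `T`, so `T/P ≅ B[X]/Q` is a field.
-/

open Polynomial

namespace Subring

section Conductor

variable {S : Type*} [CommRing S] {R : Subring S} {c : R}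

def conductorColon (hc : ∀ s : S, (c : S) * s ∈ R) (P : Ideal R) : Ideal S where
  carrier := {s | ∀ t, (⟨c * (s * t), hc _⟩ : R) ∈ P}
  add_mem' {s s'} hs hs' t := by
    convert P.add_mem (hs t) (hs' t) using 1
    exact Subtype.ext (by rw [Subring.coe_add]; ring)
  zero_mem' t := by
    convert P.zero_mem
    simp
  smul_mem' a s hs t := by
    convert hs (a * t) using 3
    simp only [smul_eq_mul]
    ring

theorem conductor_mul_mul_eq (hc : ∀ s : S, (c : S) * s ∈ R) (s t : S) :
    (⟨c * s, hc s⟩ * ⟨c * t, hc t⟩ : R) = c * ⟨c * (s * t), hc _⟩ :=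
  Subtype.ext (by simp only [Subring.coe_mul]; ring)

theorem surjective_mk_comp_subtype_of_isUnit (hc : ∀ s : S, (c : S) * s ∈ R) (Q : Ideal S)
    (hu : IsUnit (Ideal.Quotient.mk Q c)) :
    Function.Surjective ((Ideal.Quotient.mk Q).comp R.subtype) := by
  obtain ⟨t, ht⟩ := hu.exists_right_inv
  obtain ⟨t, rfl⟩ := Ideal.Quotient.mk_surjective t
  intro y
  obtain ⟨s, rfl⟩ := Ideal.Quotient.mk_surjective y
  refine ⟨⟨c * s, hc s⟩ * ⟨c * (t * t), hc _⟩, ?_⟩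
  simp only [RingHom.comp_apply, Subring.coe_subtype, map_mul] at ht ⊢
  linear_combination
    (Ideal.Quotient.mk Q s * (Ideal.Quotient.mk Q c * Ideal.Quotient.mk Q t + 1)) * ht

variable {P : Ideal R} [hP : P.IsPrime]

section

variable {hc : ∀ s : S, (c : S) * s ∈ R}

theorem conductor_mul_mem_of_mem (hcP : c ∈ P) (s : S) : (⟨c * s, hc s⟩ : R) ∈ P := by
  have hsq : (⟨c * s, hc s⟩ : R) ^ 2 = c * ⟨c * (s * s), hc _⟩ := by
    rw [sq, conductor_mul_mul_eq]
  exact hP.mem_of_pow_mem 2 (hsq ▸ P.mul_mem_right _ hcP)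

theorem mem_conductorColon_iff (hcP : c ∉ P) {s : S} :
    s ∈ conductorColon hc P ↔ (⟨c * s, hc s⟩ : R) ∈ P := by
  refine ⟨fun hs => by simpa using hs 1, fun hs t => ?_⟩
  exact (hP.mem_or_mem (conductor_mul_mul_eq hc s t ▸ P.mul_mem_right _ hs)).resolve_left hcP

theorem comap_conductorColon (hcP : c ∉ P) : (conductorColon hc P).comap R.subtype = P := by
  ext r
  rw [Ideal.mem_comap, mem_conductorColon_iff hcP]
  exact ⟨fun h => (hP.mem_or_mem h).resolve_left hcP, P.mul_mem_left c⟩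

theorem conductorColon_isPrime (hcP : c ∉ P) : (conductorColon hc P).IsPrime := by
  refine ⟨fun htop => hcP ?_, fun {s t} hst => ?_⟩
  · simpa using (mem_conductorColon_iff hcP).1 ((Ideal.eq_top_iff_one _).1 htop)
  · simp only [mem_conductorColon_iff hcP] at hst ⊢
    exact hP.mem_or_mem (conductor_mul_mul_eq hc s t ▸ P.mul_mem_left c hst)

theorem conductorColon_ne_bot (hP0 : P ≠ ⊥) (hcP : c ∉ P) : conductorColon hc P ≠ ⊥ := by
  intro hbot
  apply hP0
  rw [← comap_conductorColon (hc := hc) hcP, hbot]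
  exact Ideal.comap_bot_of_injective _ Subtype.val_injective

end

theorem isMaximal_of_conductor_notMem [Ring.DimensionLEOne S] (hc : ∀ s : S, (c : S) * s ∈ R)
    (hP0 : P ≠ ⊥) (hcP : c ∉ P) : P.IsMaximal := by
  set Q := conductorColon hc P
  have hQ : Q.IsMaximal := (conductorColon_isPrime hcP).isMaximal (conductorColon_ne_bot hP0 hcP)
  let := Ideal.Quotient.field Q
  have hcQ : Ideal.Quotient.mk Q c ≠ 0 := by
    rw [Ne, Ideal.Quotient.eq_zero_iff_mem]
    rwa [← comap_conductorColon hcP, Ideal.mem_comap] at hcP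
  have hker : RingHom.ker ((Ideal.Quotient.mk Q).comp R.subtype) = P := by
    rw [← RingHom.comap_ker, Ideal.mk_ker, comap_conductorColon hcP]
  rw [← hker]
  exact RingHom.ker_isMaximal_of_surjective _
    (surjective_mk_comp_subtype_of_isUnit hc Q (isUnit_iff_ne_zero.2 hcQ))

end Conductor

variable {B : Type*} [CommRing B] (A : Subring B)

noncomputable def compositeX : A.composite := ⟨X, by simp [mem_composite]⟩

theorem compositeX_mul_mem (f : B[X]) : (A.compositeX : B[X]) * f ∈ A.composite := by
  simp [compositeX, mem_composite]

end Subring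

theorem Subfield.composite_isMaximal_of_X_mem {B : Type*} [Field B] {A : Subfield B}
    {P : Ideal A.toSubring.composite} [P.IsPrime] (hXP : A.toSubring.compositeX ∈ P) :
    P.IsMaximal := by
  let ε : A.toSubring.composite →+* A := constantCoeff.restrict _ A fun _ h => h
  have hε : Function.Surjective ε := fun a =>
    ⟨⟨C a, by simp [Subring.mem_composite]⟩, Subtype.ext coeff_C_zero⟩
  have hker : RingHom.ker ε ≤ P := by
    intro f hf
    have hf0 : (f : B[X]).coeff 0 = 0 := congrArg Subtype.val hf
    have hfX : f = ⟨X * (f : B[X]).divX, A.toSubring.compositeX_mul_mem _⟩ := by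
      ext1
      conv_lhs => rw [← X_mul_divX_add (f : B[X]), hf0, map_zero, add_zero]
    rw [hfX]
    exact Subring.conductor_mul_mem_of_mem hXP _
  have hmax := RingHom.ker_isMaximal_of_surjective ε hε
  rwa [hmax.eq_of_le ‹P.IsPrime›.ne_top hker] at hmax

theorem composite_prime_isMaximal {B : Type*} [Field B] (A : Subfield B)
    (P : Ideal A.toSubring.composite) (hP : P.IsPrime) (hne : P ≠ ⊥) :
    P.IsMaximal := by
  by_cases hXP : A.toSubring.compositeX ∈ P
  · exact Subfield.composite_isMaximal_of_X_mem hXP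
  · exact Subring.isMaximal_of_conductor_notMem A.toSubring.compositeX_mul_mem hne hXP
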